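/- Let n = 2 and A = {0,1}, and let P ⊆ 2{0,1}* be a finite maximal joinless code with P ≠ {(ε,ε)}. Then there exists a leaf v = (v_1,v_2) of the interior dag of P, of maximal depth among interior vertices of the P-dag, such that v_+ = {(v_1 0, v_2), (v_1 1, v_2)} or v_+ = {(v_1, v_2 0), (v_1, v_2 1)}, where v_+ = {v·a : a ∈ A_{ε,2}} ∩ P. -/

import Mathlib

namespace BrinThompson

abbrev W (A : Type*) (n : ℕ) : Type _ := Fin n → List A

variable {A : Type*} {n : ℕ}

/-- Coordinatewise concatenation in `nA*`. -/
def cat (u x : W A n) : W A n := fun i => u i ++ x i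

/-- `u ≤_init v` : `u` is an initial factor of `v`. -/
def initLE (u v : W A n) : Prop := ∃ x : W A n, v = cat u x

/-- `w` is the join (least upper bound) of `u` and `v` w.r.t. `≤_init`. -/
def isJoin (u v w : W A n) : Prop :=
  initLE u w ∧ initLE v w ∧ ∀ z : W A n, initLE u z → initLE v z → initLE w z

/-- `u` and `v` have a join. -/
def HasJoin (u v : W A n) : Prop := ∃ w : W A n, isJoin u v w

/-- A joinless code: no two distinct elements have a join. -/
def JoinlessCode (S : Set (W A n)) : Prop :=
  ∀ u ∈ S, ∀ v ∈ S, u ≠ v → ¬ HasJoin u v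

/-- A maximal joinless code: joinless, and every element of `nA*` has a join
with some element of the code. -/
def MaxJoinlessCode (S : Set (W A n)) : Prop :=
  JoinlessCode S ∧ ∀ x : W A n, ∃ p ∈ S, HasJoin x p

/-- The right ideal `C · nA*` generated by `C`. -/
def genIdeal (C : Set (W A n)) : Set (W A n) := {w | ∃ c ∈ C, ∃ x : W A n, w = cat c x}

def IsRightIdeal (R : Set (W A n)) : Prop := genIdeal R = R

/-- An initial factor code: pairwise `≤_init`-incomparable set. -/
def InitFactorCode (S : Set (W A n)) : Prop :=
  ∀ u ∈ S, ∀ v ∈ S, initLE u v → u = v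

/-- `A_{ε,n}`: tuples with one coordinate a single letter and the rest empty. -/
def Aeps (A : Type*) (n : ℕ) : Set (W A n) :=
  {w | ∃ i : Fin n, ∃ a : A, w i = [a] ∧ ∀ j : Fin n, j ≠ i → w j = []}

/-- `(ε)^n`, the tuple of empty strings. -/
def epsn (A : Type*) (n : ℕ) : W A n := fun _ => []

/-- `nA^ω`: `n`-tuples of one-sided infinite sequences over `A`. -/
abbrev Winf (A : Type*) (n : ℕ) : Type _ := Fin n → ℕ → A

/-- Concatenation of a finite tuple `p ∈ nA*` with an infinite tuple `u ∈ nA^ω`. -/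
def catInf (p : W A n) (u : Winf A n) : Winf A n :=
  fun i k => if h : k < (p i).length then (p i).get ⟨k, h⟩ else u i (k - (p i).length)

/-- `v` is an interior vertex of the `P`-dag: a strict initial factor of
some element of `P`. -/
def Interior (P : Set (W A n)) (v : W A n) : Prop := ∃ p ∈ P, initLE v p ∧ v ≠ p

/-- The child of `v` in direction `i`, extended by letter `a`. -/
def child (v : W A n) (i : Fin n) (a : A) : W A n := Function.update v i (v i ++ [a])

/-- A leaf of the interior dag of `P`: an interior vertex none of whose
children is interior. -/
def InteriorLeaf (P : Set (W A n)) (v : W A n) : Prop :=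
  Interior P v ∧ ∀ (i : Fin n) (a : A), ¬ Interior P (child v i a)

/-- `v_+ = (v · A_{ε,n}) ∩ P`, the set of children of `v` belonging to `P`. -/
def vplus (P : Set (W A n)) (v : W A n) : Set (W A n) :=
  {w | (∃ (i : Fin n) (a : A), w = child v i a) ∧ w ∈ P}

/-- The depth of a vertex: the sum of the coordinate lengths. -/
def depth (v : W A n) : ℕ := ∑ i, (v i).length

/-- One-step restriction of `P` at `(p, i)`. -/
def oneStep (P : Set (W A n)) (p : W A n) (i : Fin n) : Set (W A n) :=
  (P \ {p}) ∪ {w | ∃ a : A, w = child p i a}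

/-- One step in a sequence of one-step restrictions. -/
def RestrStep (P Q : Set (W A n)) : Prop := ∃ p ∈ P, ∃ i : Fin n, Q = oneStep P p i

/-- The box code `A^{k_1} × … × A^{k_n}`. -/
def box (A : Type*) {n : ℕ} (k : Fin n → ℕ) : Set (W A n) :=
  {w | ∀ i : Fin n, (w i).length = k i}

/-- Elementwise join `P ∨ Q` of two sets, ranging over the joins that exist. -/
def setJoin (P Q : Set (W A n)) : Set (W A n) :=
  {w | ∃ p ∈ P, ∃ q ∈ Q, isJoin p q w}

/-- `ℓ(S)`: the maximum coordinate length occurring in `S`. -/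
noncomputable def ell (S : Set (W A n)) : ℕ :=
  sSup {m | ∃ z ∈ S, ∃ i : Fin n, (z i).length = m}

/-- An element of `n RI^fin_A`: an injective right ideal morphism of `nA*`
whose domain code and image code are finite maximal joinless codes.
`toFun` is a total function whose values outside `Dom` are irrelevant. -/
structure RIMfin (A : Type*) (n : ℕ) where
  Dom : Set (W A n)
  toFun : W A n → W A n
  domC : Set (W A n)
  imC : Set (W A n)
  ideal : IsRightIdeal Dom
  morph : ∀ x ∈ Dom, ∀ w : W A n, toFun (cat x w) = cat (toFun x) w
  inj : Set.InjOn toFun Dom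
  domC_gen : genIdeal domC = Dom
  imC_gen : genIdeal imC = toFun '' Dom
  domC_fin : domC.Finite
  domC_max : MaxJoinlessCode domC
  imC_fin : imC.Finite
  imC_max : MaxJoinlessCode imC

/-- `ℓ(f) = max{ℓ(z) : z ∈ domC(f) ∪ imC(f)}`. -/
noncomputable def ellF (F : RIMfin A n) : ℕ := ell (F.domC ∪ F.imC)

/-- `G` extends `F` (as partial functions). -/
def Extends (F G : RIMfin A n) : Prop :=
  F.Dom ⊆ G.Dom ∧ ∀ x ∈ F.Dom, G.toFun x = F.toFun x

/-- `F` and `G` are equal as partial functions. -/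
def EquivRIM (F G : RIMfin A n) : Prop :=
  F.Dom = G.Dom ∧ ∀ x ∈ F.Dom, F.toFun x = G.toFun x

/-- `G` is a maximal extension of `F` in `n RI^fin_A`. -/
def MaxExtension (F G : RIMfin A n) : Prop :=
  Extends F G ∧ ∀ H : RIMfin A n, Extends G H → EquivRIM G H


/-!
Take an interior vertex `v` of maximal depth; some child `v · (a in direction i)` lies in `P`.
If a sibling `v · (b in direction i)` is missing from `P`, the element `q ∈ P` joinable with it
satisfies `v_i b ≤ q_i` and `q_j < v_j`. Then the parent `v'` of `v · (a in direction i)` in the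
other direction `j` is again an interior vertex of maximal depth. Were one of its `j`-children
missing from `P` as well, the corresponding `q'` would satisfy `q'_i ≤ v_i < q_i` and
`q_j ≤ v'_j < q'_j`, so `q ≠ q'` would have a join. Hence `v` or `v'` has all its children in one
direction in `P`, and these are all of `v_+` because children in different directions have a join.
-/

theorem exists_concat_of_prefix_of_ne {l m : List A} (h : l <+: m) (hne : l ≠ m) :
    ∃ u c, m = u ++ [c] ∧ l <+: u := by
  rcases m.eq_nil_or_concat' with rfl | ⟨u, c, rfl⟩
  · exact absurd (List.prefix_nil.1 h) hne
  · exact ⟨u, c, rfl, (List.prefix_concat_iff.1 h).resolve_left hne⟩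

theorem initLE_iff {u v : W A n} : initLE u v ↔ ∀ i, u i <+: v i := by
  constructor
  · rintro ⟨x, rfl⟩ i
    exact ⟨x i, rfl⟩
  · intro h
    choose x hx using h
    exact ⟨x, funext fun i => (hx i).symm⟩

theorem hasJoin_iff {u v : W A n} : HasJoin u v ↔ ∀ i, u i <+: v i ∨ v i <+: u i := by
  classical
  constructor
  · rintro ⟨w, hu, hv, -⟩ i
    exact List.prefix_or_prefix_of_prefix (initLE_iff.1 hu i) (initLE_iff.1 hv i)
  · intro h
    refine ⟨fun i => if u i <+: v i then v i else u i, ?_, ?_, ?_⟩ <;> simp only [initLE_iff]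
    · intro i
      split_ifs with hi
      exacts [hi, List.prefix_rfl]
    · intro i
      split_ifs with hi
      exacts [List.prefix_rfl, (h i).resolve_left hi]
    · intro z hu hv i
      split_ifs
      exacts [hv i, hu i]

theorem hasJoin_of_initLE {u v z : W A n} (hu : initLE u z) (hv : initLE v z) : HasJoin u v :=
  hasJoin_iff.2 fun i => List.prefix_or_prefix_of_prefix (initLE_iff.1 hu i) (initLE_iff.1 hv i)

theorem JoinlessCode.eq_of_hasJoin {P : Set (W A n)} (hP : JoinlessCode P) {u v : W A n}
    (hu : u ∈ P) (hv : v ∈ P) (h : HasJoin u v) : u = v :=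
  by_contra fun hne => hP u hu v hv hne h

theorem depth_le_of_initLE {u v : W A n} (h : initLE u v) : depth u ≤ depth v :=
  Finset.sum_le_sum fun k _ => (initLE_iff.1 h k).length_le

section Child

variable (v : W A n) (a b : A)

@[simp]
theorem child_apply_self (i : Fin n) : child v i a i = v i ++ [a] := by
  simp [child]

@[simp]
theorem child_apply_of_ne {i k : Fin n} (h : k ≠ i) : child v i a k = v k := by
  simp [child, h]

theorem child_comm {i k : Fin n} (h : i ≠ k) :
    child (child v i a) k b = child (child v k b) i a := by
  simp [child, h, h.symm, Function.update_comm h]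

theorem depth_child (i : Fin n) : depth (child v i a) = depth v + 1 := by
  simp only [depth, child, Function.apply_update (fun _ => List.length), List.length_append,
    List.length_cons, List.length_nil, zero_add, Finset.mem_univ, Finset.sum_update_of_mem,
    Finset.sum_eq_add_sum_sdiff_singleton_of_mem (Finset.mem_univ i) fun k => (v k).length]
  omega

theorem initLE_child (i : Fin n) : initLE v (child v i a) :=
  initLE_iff.2 fun k => by
    by_cases hk : k = i
    · subst hk
      simp
    · simp [hk]

theorem child_ne (i : Fin n) : child v i a ≠ v :=
  ne_of_apply_ne depth (by simp [depth_child])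

theorem child_ne_child {i k : Fin n} (h : i ≠ k) : child v i a ≠ child v k b := by
  intro e
  simpa [h] using congrFun e i

theorem child_update_eq {w : W A n} {j : Fin n} {u : List A} {c : A} (h : w j = u ++ [c]) :
    child (Function.update w j u) j c = w := by
  simp [child, ← h]

end Child

theorem exists_child_initLE {v p : W A n} (h : initLE v p) (hne : v ≠ p) :
    ∃ i a, initLE (child v i a) p := by
  obtain ⟨x, rfl⟩ := h
  obtain ⟨i, hi⟩ : ∃ i, x i ≠ [] := by
    by_contra! hx
    exact hne (funext fun i => by simp [cat, hx i])
  obtain ⟨a, t, hx⟩ := List.exists_cons_of_ne_nil hi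
  refine ⟨i, a, Function.update x i t, funext fun k => ?_⟩
  by_cases hk : k = i
  · subst hk
    simp [cat, hx]
  · simp [cat, hk]

theorem interior_of_child_mem {P : Set (W A n)} {v : W A n} {i : Fin n} {a : A}
    (h : child v i a ∈ P) : Interior P v :=
  ⟨_, h, initLE_child v a i, (child_ne v a i).symm⟩

theorem interior_epsn {P : Set (W A n)} {p : W A n} (hp : p ∈ P) (hne : p ≠ epsn A n) :
    Interior P (epsn A n) :=
  ⟨p, hp, initLE_iff.2 fun _ => List.nil_prefix, hne.symm⟩

theorem vplus_eq_of_forall_child_mem {P : Set (W A n)} (hP : JoinlessCode P) {v : W A n}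
    {i : Fin n} (h : ∀ a, child v i a ∈ P) : vplus P v = {w | ∃ a, w = child v i a} := by
  ext w
  constructor
  · rintro ⟨⟨k, b, rfl⟩, hw⟩
    by_cases hk : k = i
    · exact ⟨b, hk ▸ rfl⟩
    · refine absurd (hP.eq_of_hasJoin (h b) hw ?_) (child_ne_child v b b (Ne.symm hk))
      exact hasJoin_of_initLE (initLE_child _ b k)
        (child_comm v b b (Ne.symm hk) ▸ initLE_child _ b i)
  · rintro ⟨a, rfl⟩
    exact ⟨⟨i, a, rfl⟩, h a⟩

def IsMaxDepthInterior (P : Set (W A n)) (v : W A n) : Prop :=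
  Interior P v ∧ ∀ w, Interior P w → depth w ≤ depth v

theorem exists_isMaxDepthInterior {P : Set (W A n)} (hfin : P.Finite) {v : W A n}
    (hv : Interior P v) : ∃ u, IsMaxDepthInterior P u := by
  have hbdd : BddAbove (depth '' {w | Interior P w}) := by
    obtain ⟨B, hB⟩ := (hfin.image depth).bddAbove
    refine ⟨B, ?_⟩
    rintro _ ⟨w, ⟨p, hp, hwp, -⟩, rfl⟩
    exact (depth_le_of_initLE hwp).trans (hB ⟨p, hp, rfl⟩)
  obtain ⟨u, hu, hud⟩ := Nat.sSup_mem (Set.Nonempty.image depth ⟨v, hv⟩) hbdd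
  exact ⟨u, hu, fun w hw => (le_csSup hbdd (Set.mem_image_of_mem depth hw)).trans_eq hud.symm⟩

namespace IsMaxDepthInterior

variable {P : Set (W A n)} {v : W A n}

theorem child_not_interior (hv : IsMaxDepthInterior P v) (i : Fin n) (a : A) :
    ¬ Interior P (child v i a) := fun h => by
  have := hv.2 _ h
  rw [depth_child] at this
  omega

theorem interiorLeaf (hv : IsMaxDepthInterior P v) : InteriorLeaf P v :=
  ⟨hv.1, hv.child_not_interior⟩

theorem child_mem_of_initLE (hv : IsMaxDepthInterior P v) {i : Fin n} {a : A} {p : W A n}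
    (hp : p ∈ P) (h : initLE (child v i a) p) : child v i a ∈ P := by
  by_contra hc
  exact hv.child_not_interior i a ⟨p, hp, h, fun e => hc (e ▸ hp)⟩

theorem exists_child_mem (hv : IsMaxDepthInterior P v) : ∃ i a, child v i a ∈ P := by
  obtain ⟨p, hp, hvp, hne⟩ := hv.1
  obtain ⟨i, a, h⟩ := exists_child_initLE hvp hne
  exact ⟨i, a, hv.child_mem_of_initLE hp h⟩

theorem of_child_eq (hv : IsMaxDepthInterior P v) {v' : W A n} {i j : Fin n} {a c : A}
    (hmem : child v i a ∈ P) (h : child v' j c = child v i a) : IsMaxDepthInterior P v' := by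
  have hdepth : depth v' = depth v := by
    have := congrArg depth h
    simp only [depth_child] at this
    omega
  exact ⟨interior_of_child_mem (h ▸ hmem), fun w hw => hdepth ▸ hv.2 w hw⟩

end IsMaxDepthInterior

section TwoCoordinates

theorem forall_fin_two_iff_of_ne {i j : Fin 2} (hij : i ≠ j) {p : Fin 2 → Prop} :
    (∀ k, p k) ↔ p i ∧ p j := by
  refine ⟨fun h => ⟨h i, h j⟩, fun ⟨hi, hj⟩ k => ?_⟩
  rcases (by omega : k = i ∨ k = j) with rfl | rfl
  exacts [hi, hj]

variable {P : Set (W A 2)} {v : W A 2}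

theorem IsMaxDepthInterior.exists_mem_of_child_not_mem (hmax : MaxJoinlessCode P)
    (hv : IsMaxDepthInterior P v) {i j : Fin 2} (hij : i ≠ j) {a b : A}
    (ha : child v i a ∈ P) (hb : child v i b ∉ P) :
    ∃ q ∈ P, v i ++ [b] <+: q i ∧ q j <+: v j ∧ q j ≠ v j := by
  obtain ⟨q, hq, hjoin⟩ := hmax.2 (child v i b)
  rw [hasJoin_iff, forall_fin_two_iff_of_ne hij, child_apply_self,
    child_apply_of_ne _ _ hij.symm] at hjoin
  obtain ⟨hqi, hqj⟩ := hjoin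
  have hbq : v i ++ [b] <+: q i := by
    rcases hqi with h | h
    · exact h
    rcases List.prefix_concat_iff.1 h with h | hqv
    · exact h ▸ List.prefix_rfl
    have hqa : child v i a = q := hmax.1.eq_of_hasJoin ha hq <| by
      rw [hasJoin_iff, forall_fin_two_iff_of_ne hij, child_apply_self,
        child_apply_of_ne _ _ hij.symm]
      exact ⟨Or.inr (hqv.trans (List.prefix_append _ _)), hqj⟩
    have := hqv.length_le
    simp [← hqa] at this
  have hnot : ¬ v j <+: q j := fun h => hb <| hv.child_mem_of_initLE hq <| by
    rw [initLE_iff, forall_fin_two_iff_of_ne hij, child_apply_self,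
      child_apply_of_ne _ _ hij.symm]
    exact ⟨hbq, h⟩
  exact ⟨q, hq, hbq, hqj.resolve_left hnot, fun e => hnot (e ▸ List.prefix_rfl)⟩

theorem IsMaxDepthInterior.exists_forall_child_mem (hmax : MaxJoinlessCode P)
    (hv : IsMaxDepthInterior P v) : ∃ u, IsMaxDepthInterior P u ∧ ∃ k, ∀ b, child u k b ∈ P := by
  obtain ⟨i, a, ha⟩ := hv.exists_child_mem
  obtain ⟨j, hji⟩ := exists_ne i
  by_cases hfull : ∀ b, child v i b ∈ P
  · exact ⟨v, hv, i, hfull⟩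
  obtain ⟨b, hb⟩ := not_forall.1 hfull
  obtain ⟨q, hq, hqi, hqj, hqj_ne⟩ := hv.exists_mem_of_child_not_mem hmax hji.symm ha hb
  obtain ⟨u, c, hvj, hqu⟩ := exists_concat_of_prefix_of_ne hqj hqj_ne
  -- `v'` is the parent of `child v i a` in direction `j`
  set v' := Function.update (child v i a) j u with hv'
  have hv'c : child v' j c = child v i a := child_update_eq (by simp [hji, hvj])
  have hv'max := hv.of_child_eq ha hv'c
  by_cases hfull' : ∀ c, child v' j c ∈ P
  · exact ⟨v', hv'max, j, hfull'⟩
  obtain ⟨c', hc'⟩ := not_forall.1 hfull'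
  obtain ⟨q', hq', hq'j, hq'i, hq'i_ne⟩ :=
    hv'max.exists_mem_of_child_not_mem hmax hji (hv'c ▸ ha) hc'
  have hv'i : v' i = v i ++ [a] := by simp [hv', hji.symm]
  have hv'j : v' j = u := by simp [hv']
  rw [hv'i] at hq'i hq'i_ne
  rw [hv'j] at hq'j
  have hq'v : q' i <+: v i := (List.prefix_concat_iff.1 hq'i).resolve_left hq'i_ne
  have hqq' : q = q' := hmax.1.eq_of_hasJoin hq hq' <|
    hasJoin_iff.2 <| (forall_fin_two_iff_of_ne hji.symm).2
      ⟨Or.inr (hq'v.trans ((List.prefix_append _ _).trans hqi)),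
        Or.inl (hqu.trans ((List.prefix_append _ _).trans hq'j))⟩
  have hlen := hqi.length_le
  rw [List.length_append, List.length_singleton, hqq'] at hlen
  exact absurd hq'v.length_le (by omega)

end TwoCoordinates

/-- For `n = 2`, `A = {0,1}`: every finite maximal joinless code
`P ≠ {(ε,ε)}` has a maximum-depth leaf `v` of its interior dag whose set
`v_+` equals the full set of children of `v` in one of the two directions. -/
theorem exists_maxDepth_interiorLeaf_full {P : Set (W Bool 2)}
    (hfin : P.Finite) (hmax : MaxJoinlessCode P) (hne : P ≠ {epsn Bool 2}) :
    ∃ v : W Bool 2, InteriorLeaf P v ∧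
      (∀ w : W Bool 2, Interior P w → depth w ≤ depth v) ∧
      (vplus P v = {w | ∃ a : Bool, w = child v (0 : Fin 2) a} ∨
       vplus P v = {w | ∃ a : Bool, w = child v (1 : Fin 2) a}) := by
  obtain ⟨p, hp, hpe⟩ : ∃ p ∈ P, p ≠ epsn Bool 2 := by
    by_contra! h
    obtain ⟨p, hp, -⟩ := hmax.2 (epsn Bool 2)
    exact hne (Set.eq_singleton_iff_nonempty_unique_mem.2 ⟨⟨p, hp⟩, h⟩)
  obtain ⟨v, hv⟩ := exists_isMaxDepthInterior hfin (interior_epsn hp hpe)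
  obtain ⟨u, hu, k, hk⟩ := hv.exists_forall_child_mem hmax
  refine ⟨u, hu.interiorLeaf, hu.2, ?_⟩
  fin_cases k
  exacts [Or.inl (vplus_eq_of_forall_child_mem hmax.1 hk),
    Or.inr (vplus_eq_of_forall_child_mem hmax.1 hk)]

end BrinThompson
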